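/- For every n ≥ 0, with p = ⌊(n+1)/2⌋, one has 2 · ∑_{k=0}^{⌊n/2⌋} ∑_{q=0}^{k} ∑_{r=0}^{q} binom(n−k, r) = 2·F_{n+5} − 2^p·(p + 7 + (−1)^n), as an identity of integers. -/
import Mathlib

def Pz (m k : ℕ) : ℤ := ∑ r ∈ Finset.range (k+1), (m.choose r : ℤ)
def Az (m k : ℕ) : ℤ := ∑ q ∈ Finset.range (k+1), Pz m q

lemma Pz_full (m : ℕ) {k : ℕ} (h : m ≤ k) : Pz m k = 2 ^ m := by
  unfold Pz
  rw [← Finset.sum_subset (Finset.range_subset_range.2 (by omega) :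
      Finset.range (m+1) ⊆ Finset.range (k+1))]
  · have := Nat.sum_range_choose m
    exact_mod_cast congrArg (Nat.cast : ℕ → ℤ) this
  · intro x _ hx
    have : m < x := by simp [Finset.mem_range] at hx; omega
    simp [Nat.choose_eq_zero_of_lt this]

lemma Pz_succ_k (m k : ℕ) : Pz m (k+1) = Pz m k + (m.choose (k+1) : ℤ) :=
  Finset.sum_range_succ _ _

lemma Pz_succ (m k : ℕ) : Pz (m+1) k = 2 * Pz m k - (m.choose k : ℤ) := by
  induction k with
  | zero => simp [Pz]
  | succ k ih =>
    rw [Pz_succ_k, Pz_succ_k, ih, Nat.choose_succ_succ (m) (k)]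
    push_cast
    ring

lemma Az_succ_k (m k : ℕ) : Az m (k+1) = Az m k + Pz m (k+1) :=
  Finset.sum_range_succ _ _

lemma Az_diag (M : ℕ) : 2 * Az M M = (M + 2) * 2 ^ M := by
  induction M with
  | zero => simp [Az, Pz]
  | succ M ih =>
    have h1 : Az (M+1) (M+1) = 2 * Az M M + 2 ^ M := by
      have : Az (M+1) (M+1) = ∑ q ∈ Finset.range (M+2), (2 * Pz M q - (M.choose q : ℤ)) := by
        unfold Az
        exact Finset.sum_congr rfl fun q _ => Pz_succ M q
      rw [this, Finset.sum_sub_distrib, ← Finset.mul_sum]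
      have h2 : ∑ q ∈ Finset.range (M+2), Pz M q = Az M M + 2 ^ M := by
        rw [show M + 2 = (M+1) + 1 from rfl, Finset.sum_range_succ]
        rw [Pz_full M (by omega)]
        rfl
      have h3 : ∑ q ∈ Finset.range (M+2), (M.choose q : ℤ) = 2 ^ M := by
        rw [show M + 2 = (M+1) + 1 from rfl, Finset.sum_range_succ,
          Nat.choose_eq_zero_of_lt (by omega)]
        have := Nat.sum_range_choose M
        push_cast
        exact_mod_cast congrArg (Nat.cast : ℕ → ℤ) this
      rw [h2, h3]; ring
    rw [h1]; push_cast; linear_combination 2 * ih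

lemma fib_diag (n : ℕ) : ∑ k ∈ Finset.range (n/2+1), ((n-k).choose k : ℤ)
    = (Nat.fib (n+1) : ℤ) := by
  have h0 : Nat.fib (n+1) = ∑ k ∈ Finset.range (n+1), (n-k).choose k := by
    rw [Nat.fib_succ_eq_sum_choose, Finset.Nat.sum_antidiagonal_eq_sum_range_succ_mk,
      ← Finset.sum_range_reflect]
    refine Finset.sum_congr rfl fun k hk => ?_
    simp only [Finset.mem_range] at hk
    congr 1 <;> omega
  have h1 : ∑ k ∈ Finset.range (n/2+1), ((n-k).choose k : ℤ)
      = ∑ k ∈ Finset.range (n+1), ((n-k).choose k : ℤ) := by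
    refine Finset.sum_subset (Finset.range_subset_range.2 (by omega)) fun x _ hx => ?_
    simp only [Finset.mem_range] at hx
    have : n - x < x := by omega
    simp [Nat.choose_eq_zero_of_lt this]
  rw [h1, h0]
  push_cast
  rfl

lemma E_eq (m : ℕ) : ∑ i ∈ Finset.range (m/2+1), ((m+1-i).choose (i+1) : ℤ)
    = (Nat.fib (m+3) : ℤ) - 1 := by
  have h := fib_diag (m+2)
  rw [show (m+2)/2 + 1 = (m/2 + 1) + 1 from by omega, Finset.sum_range_succ'] at h
  simp only [Nat.sub_zero, Nat.choose_zero_right, Nat.cast_one] at h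
  have h2 : ∑ i ∈ Finset.range (m/2+1), ((m+2-(i+1)).choose (i+1) : ℤ)
      = ∑ i ∈ Finset.range (m/2+1), ((m+1-i).choose (i+1) : ℤ) := by
    refine Finset.sum_congr rfl fun i _ => ?_
    congr 2
    omega
  rw [h2] at h
  have : (m+2) + 1 = m + 3 := rfl
  rw [this] at h
  linarith [h]

lemma Pz_zero (m : ℕ) : Pz m 0 = 1 := by simp [Pz]

lemma B_eq (n : ℕ) : ∑ k ∈ Finset.range (n/2+1), Pz (n-k) k
    = (Nat.fib (n+3) : ℤ) - 2 ^ ((n+1)/2) := by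
  induction n using Nat.twoStepInduction with
  | zero => simp [Pz]; decide
  | one => simp [Pz]; decide
  | more m ih ih1 =>
    clear ih
    rw [show (m+2)/2+1 = (m/2+1)+1 from by omega, Finset.sum_range_succ']
    have hc : ∑ i ∈ Finset.range (m/2+1), Pz (m+2-(i+1)) (i+1)
        = (∑ i ∈ Finset.range (m/2+1), Pz (m+1-i) i)
          + ((Nat.fib (m+3) : ℤ) - 1) := by
      rw [← E_eq m, ← Finset.sum_add_distrib]
      refine Finset.sum_congr rfl fun i _ => ?_
      rw [show m+2-(i+1) = m+1-i from by omega, Pz_succ_k]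
    rw [hc, Pz_zero]
    rcases Nat.even_or_odd m with ⟨j, rfl⟩ | ⟨j, rfl⟩
    · -- m = j + j
      rw [show (j+j+1)/2+1 = (j+j)/2+1 from by omega] at ih1
      have hf : (Nat.fib (j+j+2+3) : ℤ) = Nat.fib (j+j+1+3) + Nat.fib (j+j+3) := by
        have := Nat.fib_add_two (n := j+j+3)
        push_cast [this]; try ring
      rw [hf, ih1]
      rw [show (j+j+1+1)/2 = j+1 from by omega, show (j+j+2+1)/2 = j+1 from by omega]
      ring
    · -- m = 2j+1
      rw [show (2*j+1+1)/2+1 = (j+1)+1 from by omega, Finset.sum_range_succ] at ih1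
      rw [show 2*j+1+1-(j+1) = j+1 from by omega, Pz_full (j+1) (le_refl _)] at ih1
      rw [show (2*j+1)/2+1 = j+1 from by omega]
      rw [show (2*j+1+1+1)/2 = j+1 from by omega] at ih1
      rw [show (2*j+1+2+1)/2 = j+2 from by omega]
      have hf : (Nat.fib (2*j+1+2+3) : ℤ) = Nat.fib (2*j+1+1+3) + Nat.fib (2*j+1+3) := by
        have := Nat.fib_add_two (n := 2*j+1+3)
        push_cast [this]; try ring
      rw [hf]
      linear_combination ih1

lemma Az_zero (m : ℕ) : Az m 0 = 1 := by simp [Az, Pz]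

lemma main_aux (n : ℕ) :
    2 * (∑ k ∈ Finset.range (n/2+1), Az (n-k) k)
      = 2 * (Nat.fib (n + 5) : ℤ) -
        2 ^ ((n + 1) / 2) * (((n + 1) / 2 : ℕ) + 7 + (-1) ^ n) := by
  induction n using Nat.twoStepInduction with
  | zero => simp [Az, Pz]; decide
  | one => simp [Az, Pz]; decide
  | more m ih ih1 =>
    clear ih
    rw [show (m+2)/2+1 = (m/2+1)+1 from by omega, Finset.sum_range_succ', Az_zero]
    have hc : ∑ i ∈ Finset.range (m/2+1), Az (m+2-(i+1)) (i+1)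
        = (∑ i ∈ Finset.range (m/2+1), Az (m+1-i) i)
          + ((∑ i ∈ Finset.range (m/2+1), Pz (m+1-i) i)
              + ((Nat.fib (m+3) : ℤ) - 1)) := by
      rw [← E_eq m, ← Finset.sum_add_distrib, ← Finset.sum_add_distrib]
      refine Finset.sum_congr rfl fun i _ => ?_
      rw [show m+2-(i+1) = m+1-i from by omega, Az_succ_k, Pz_succ_k]
    rw [hc]
    have hB := B_eq (m+1)
    rcases Nat.even_or_odd m with ⟨j, rfl⟩ | ⟨j, rfl⟩
    · -- m = j + j (even)
      rw [show (j+j+1)/2+1 = (j+j)/2+1 from by omega] at ih1 hB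
      rw [show (j+j+1+1)/2 = j+1 from by omega] at ih1 hB
      rw [show (j+j+2+1)/2 = j+1 from by omega]
      rw [Odd.neg_one_pow (α := ℤ) (⟨j, by ring⟩ : Odd (j+j+1))] at ih1
      rw [Even.neg_one_pow (α := ℤ) (⟨j+1, by ring⟩ : Even (j+j+2))]
      have hf7 : (Nat.fib (j+j+2+5) : ℤ) = Nat.fib (j+j+1+5) + Nat.fib (j+j+5) := by
        have := Nat.fib_add_two (n := j+j+5); push_cast [this]; try ring
      have hf5 : (Nat.fib (j+j+5) : ℤ) = Nat.fib (j+j+1+3) + Nat.fib (j+j+3) := by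
        have := Nat.fib_add_two (n := j+j+3); push_cast [this]; try ring
      rw [hf7, hf5, hB]
      push_cast at ih1 ⊢
      linear_combination ih1
    · -- m = 2j+1 (odd)
      rw [show (2*j+1+1)/2+1 = (j+1)+1 from by omega, Finset.sum_range_succ] at ih1 hB
      rw [show 2*j+1+1-(j+1) = j+1 from by omega] at ih1 hB
      rw [Pz_full (j+1) (le_refl _)] at hB
      rw [show (2*j+1+1+1)/2 = j+1 from by omega] at ih1 hB
      rw [show (2*j+1)/2+1 = j+1 from by omega]
      rw [show (2*j+1+2+1)/2 = j+2 from by omega]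
      rw [Even.neg_one_pow (α := ℤ) (⟨j+1, by ring⟩ : Even (2*j+1+1))] at ih1
      rw [Odd.neg_one_pow (α := ℤ) (⟨j+1, by ring⟩ : Odd (2*j+1+2))]
      have hA2 : 2 * Az (j+1) (j+1) = ((j:ℤ)+3) * 2^(j+1) := by
        have := Az_diag (j+1); push_cast at this ⊢; linear_combination this
      have hf7 : (Nat.fib (2*j+1+2+5) : ℤ) = Nat.fib (2*j+1+1+5) + Nat.fib (2*j+1+5) := by
        have := Nat.fib_add_two (n := 2*j+1+5); push_cast [this]; try ring
      have hf5 : (Nat.fib (2*j+1+5) : ℤ) = Nat.fib (2*j+1+1+3) + Nat.fib (2*j+1+3) := by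
        have := Nat.fib_add_two (n := 2*j+1+3); push_cast [this]; try ring
      rw [hf7, hf5]
      push_cast at ih1 hB ⊢
      linear_combination ih1 + 2 * hB - hA2

theorem theoremT3 (n : ℕ) :
    2 * (∑ k ∈ Finset.range (n / 2 + 1), ∑ q ∈ Finset.range (k + 1),
          ∑ r ∈ Finset.range (q + 1), ((n - k).choose r : ℤ)) =
      2 * (Nat.fib (n + 5) : ℤ) -
        2 ^ ((n + 1) / 2) * (((n + 1) / 2 : ℕ) + 7 + (-1) ^ n) := by
  exact main_aux n
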